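/- arXiv:2009.02719 — 2 statements merged into one kernel-verified Lean document; each statement's English description precedes it below -/
import Mathlib

section
/- Let 0 ≤ η ≤ 2 - √3 and K(z) = z/(1+ηz)². Then for all z with |z| = 1 (and hence by the maximum principle for all |z| ≤ 1 where defined), Re(1 + zK''(z)/K'(z)) ≥ 0. Concretely: for all real θ, 1 - 4η(1-η²)cos θ - η⁴(1+cos θ)sin²θ ≥ 0 when 0 ≤ η ≤ 2-√3. -/
theorem stmt_3 (η : ℝ) (hη0 : 0 ≤ η) (hη : η ≤ 2 - Real.sqrt 3) :
    ∀ θ : ℝ,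
      1 - 4 * η * (1 - η ^ 2) * Real.cos θ - η ^ 4 * (1 + Real.cos θ) * Real.sin θ ^ 2 ≥ 0 := by
  intro θ
  have h3 : Real.sqrt 3 ^ 2 = 3 := Real.sq_sqrt (by norm_num)
  have h3n : (0:ℝ) ≤ Real.sqrt 3 := Real.sqrt_nonneg 3
  have h3' : (5/3 : ℝ) ≤ Real.sqrt 3 := by nlinarith
  have hη3 : η ≤ 1/3 := by linarith
  set c := Real.cos θ with hc
  have hc1 : -1 ≤ c := Real.neg_one_le_cos θ
  have hc2 : c ≤ 1 := Real.cos_le_one θ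
  have hs : Real.sin θ ^ 2 = 1 - c ^ 2 := Real.sin_sq θ
  rw [hs]
  have hA : 1 - 4*η + 4*η^3 ≥ 0 := by nlinarith [sq_nonneg (2 - Real.sqrt 3 - η), sq_nonneg η, mul_nonneg hη0 hη0]
  have hB : η - η^3 - η^4 ≥ 0 := by nlinarith [mul_nonneg hη0 hη0, mul_nonneg (mul_nonneg hη0 hη0) hη0]
  have hB' : (1 - c) * (η - η^3 - η^4) ≥ 0 := mul_nonneg (by linarith) hB
  have key : η^4 * (1 - c)^2 * (3 + c) ≥ 0 := mul_nonneg (mul_nonneg (pow_nonneg hη0 4) (sq_nonneg _)) (by linarith)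
  nlinarith [hA, hB', key]
end

section
/- Fix 0 ≤ β < 1. For z = re^{iθ} with 0 ≤ r < 1, the minimum over θ of Re(z/((1-z)(1+βz))) is attained at θ = π and equals (-r + (β-1)r² + βr³)/((1+r)²(1-βr)²). -/
/-!
On the circle `z = r e^{iθ}`, `Re ψ(z)` depends only on `c = cos θ` and is a rational function of
`c`. After clearing the (positive) denominators, its excess over the value at `c = -1` factors as
`(1 + r)(1 - βr)(c + 1)(4βr³(1 - c) + r(1 - r)(1 + βr)(1 - βr²))`, a product of nonnegative
factors.
-/

open Complex

noncomputable def cissoidMap (β : ℝ) (z : ℂ) : ℂ := z / ((1 - z) * (1 + β * z))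

theorem re_cissoidMap (β : ℝ) (z : ℂ) :
    (cissoidMap β z).re =
      ((1 - β * normSq z) * z.re + (β - 1) * normSq z) /
        ((1 - 2 * z.re + normSq z) * (1 + 2 * β * z.re + β ^ 2 * normSq z)) := by
  rw [cissoidMap, div_re, ← add_div]
  congr 1 <;>
    simp only [normSq_apply, map_mul, mul_re, mul_im, sub_re, sub_im, add_re, add_im, one_re,
      one_im, ofReal_re, ofReal_im] <;>
    ring

noncomputable def cissoidReOfCos (β r c : ℝ) : ℝ :=
  (r * (1 - β * r ^ 2) * c + (β - 1) * r ^ 2) /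
    ((1 - 2 * r * c + r ^ 2) * (1 + 2 * β * r * c + β ^ 2 * r ^ 2))

theorem re_cissoidMap_ofReal_mul_exp (β r θ : ℝ) :
    (cissoidMap β (r * exp (θ * I))).re = cissoidReOfCos β r (Real.cos θ) := by
  have hnormSq : normSq (r * exp (θ * I)) = r ^ 2 := by
    rw [normSq_mul, normSq_ofReal, normSq_eq_norm_sq, norm_exp_ofReal_mul_I]
    ring
  rw [re_cissoidMap, hnormSq, re_ofReal_mul, exp_ofReal_mul_I_re, cissoidReOfCos]
  congr 1 <;> ring

theorem cissoidReOfCos_neg_one (β r : ℝ) :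
    cissoidReOfCos β r (-1) =
      (-r + (β - 1) * r ^ 2 + β * r ^ 3) / ((1 + r) ^ 2 * (1 - β * r) ^ 2) := by
  rw [cissoidReOfCos]
  congr 1 <;> ring

theorem cissoidReOfCos_neg_one_le {β r c : ℝ} (hβ : 0 ≤ β) (hβ1 : β ≤ 1) (hr : 0 ≤ r)
    (hr1 : r < 1) (hc : -1 ≤ c) (hc1 : c ≤ 1) :
    cissoidReOfCos β r (-1) ≤ cissoidReOfCos β r c := by
  have hβr : 0 < 1 - β * r := by nlinarith
  have hβr2 : 0 ≤ 1 - β * r ^ 2 := by nlinarith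
  have hden_neg_one :
      0 < (1 - 2 * r * (-1) + r ^ 2) * (1 + 2 * β * r * (-1) + β ^ 2 * r ^ 2) := by
    rw [show (1 - 2 * r * (-1) + r ^ 2) * (1 + 2 * β * r * (-1) + β ^ 2 * r ^ 2)
      = (1 + r) ^ 2 * (1 - β * r) ^ 2 by ring]
    positivity
  have hden : 0 < (1 - 2 * r * c + r ^ 2) * (1 + 2 * β * r * c + β ^ 2 * r ^ 2) := by
    have h₁ : 0 < 1 - 2 * r * c + r ^ 2 := by nlinarith
    have h₂ : 0 < 1 + 2 * β * r * c + β ^ 2 * r ^ 2 := by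
      nlinarith [mul_nonneg (mul_nonneg hβ hr) (by linarith : 0 ≤ 1 + c)]
    positivity
  rw [cissoidReOfCos, cissoidReOfCos, div_le_div_iff₀ hden_neg_one hden, ← sub_nonneg]
  have hdiff : (r * (1 - β * r ^ 2) * c + (β - 1) * r ^ 2) *
        ((1 - 2 * r * (-1) + r ^ 2) * (1 + 2 * β * r * (-1) + β ^ 2 * r ^ 2))
      - (r * (1 - β * r ^ 2) * (-1) + (β - 1) * r ^ 2) *
        ((1 - 2 * r * c + r ^ 2) * (1 + 2 * β * r * c + β ^ 2 * r ^ 2))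
      = (1 + r) * (1 - β * r) * ((c + 1) *
          (4 * β * r ^ 3 * (1 - c) + r * (1 - r) * (1 + β * r) * (1 - β * r ^ 2))) := by
    ring
  rw [hdiff]
  have hc' : 0 ≤ 1 - c := by linarith
  have hr' : 0 ≤ 1 - r := by linarith
  have hc'' : 0 ≤ c + 1 := by linarith
  positivity

theorem stmt_8 (β r : ℝ) (hβ : 0 ≤ β) (hβ1 : β < 1) (hr : 0 ≤ r) (hr1 : r < 1) :
    (∀ θ : ℝ,
      ((((r : ℂ) * Complex.exp (Real.pi * Complex.I)) /
          ((1 - (r : ℂ) * Complex.exp (Real.pi * Complex.I)) *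
            (1 + (β : ℂ) * ((r : ℂ) * Complex.exp (Real.pi * Complex.I))))).re
        ≤ (((r : ℂ) * Complex.exp (θ * Complex.I)) /
          ((1 - (r : ℂ) * Complex.exp (θ * Complex.I)) *
            (1 + (β : ℂ) * ((r : ℂ) * Complex.exp (θ * Complex.I))))).re)) ∧
    (((r : ℂ) * Complex.exp (Real.pi * Complex.I)) /
        ((1 - (r : ℂ) * Complex.exp (Real.pi * Complex.I)) *
          (1 + (β : ℂ) * ((r : ℂ) * Complex.exp (Real.pi * Complex.I))))).re
      = (-r + (β - 1) * r ^ 2 + β * r ^ 3) / ((1 + r) ^ 2 * (1 - β * r) ^ 2) := by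
  have hπ := re_cissoidMap_ofReal_mul_exp β r Real.pi
  rw [Real.cos_pi] at hπ
  refine ⟨fun θ => ?_, ?_⟩
  · change (cissoidMap β _).re ≤ (cissoidMap β _).re
    rw [hπ, re_cissoidMap_ofReal_mul_exp]
    exact cissoidReOfCos_neg_one_le hβ hβ1.le hr hr1 (Real.neg_one_le_cos θ) (Real.cos_le_one θ)
  · change (cissoidMap β _).re = _
    rw [hπ, cissoidReOfCos_neg_one]
end
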